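/- If the block operator M = [[A, X],[X*, B]] on H ⊕ H is positive, then R(X) ⊆ R(A^{1/2}) and R(X*) ⊆ R(B^{1/2}). -/

import Mathlib

/-!
Testing positivity of the block operator on `(t • u, v)` gives a nonnegative quadratic
`‖A^{1/2} u‖² |t|² + 2 re (t ⟪X v, u⟫) + ‖B^{1/2} v‖²`, whence
`‖⟪X v, u⟫‖ ≤ ‖A^{1/2} u‖ ‖B^{1/2} v‖`. Thus `x ↦ ⟪X v, x⟫` is dominated by `‖A^{1/2} x‖`, so it
factors through a bounded functional on `R(A^{1/2})`; extending it by Hahn–Banach and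
representing it by Riesz gives `w` with `X v = A^{1/2} w`. The same argument with the roles of
`u` and `v` exchanged handles `X*`.
-/

open ContinuousLinearMap

variable {H : Type*} [NormedAddCommGroup H] [InnerProductSpace ℂ H] [CompleteSpace H]

/-- The 2×2 block operator `[[A, X],[Y, B]]` acting on the Hilbert space `H ⊕ H`
(realized as `WithLp 2 (H × H)`). -/
noncomputable def blockOperator (A X Y B : H →L[ℂ] H) :
    WithLp 2 (H × H) →L[ℂ] WithLp 2 (H × H) :=
  (WithLp.prodContinuousLinearEquiv 2 ℂ H H).symm.toContinuousLinearMap ∘L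
    ((A ∘L ContinuousLinearMap.fst ℂ H H + X ∘L ContinuousLinearMap.snd ℂ H H).prod
      (Y ∘L ContinuousLinearMap.fst ℂ H H + B ∘L ContinuousLinearMap.snd ℂ H H)) ∘L
    (WithLp.prodContinuousLinearEquiv 2 ℂ H H).toContinuousLinearMap

open scoped InnerProductSpace

theorem LinearMap.exists_strongDual_comp_eq_of_norm_le {𝕜 E F : Type*} [RCLike 𝕜]
    [AddCommGroup E] [Module 𝕜 E] [NormedAddCommGroup F] [NormedSpace 𝕜 F]
    (S : E →ₗ[𝕜] F) (g : E →ₗ[𝕜] 𝕜) (c : ℝ) (h : ∀ x, ‖g x‖ ≤ c * ‖S x‖) :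
    ∃ G : StrongDual 𝕜 F, ∀ x, G (S x) = g x := by
  have hker : LinearMap.ker S ≤ LinearMap.ker g := fun x hx => by
    simpa [LinearMap.mem_ker.mp hx] using h x
  let g₀ : LinearMap.range S →ₗ[𝕜] 𝕜 :=
    (LinearMap.ker S).liftQ g hker ∘ₗ S.quotKerEquivRange.symm
  have hg₀ : ∀ x, g₀ ⟨S x, LinearMap.mem_range_self S x⟩ = g x := fun x => by
    simp [g₀, LinearMap.quotKerEquivRange_symm_apply_image]
  obtain ⟨G, hG, -⟩ := exists_extension_norm_eq _
    (g₀.mkContinuous c (by rintro ⟨_, x, rfl⟩; simpa [hg₀] using h x))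
  exact ⟨G, fun x => (hG _).trans (hg₀ x)⟩

theorem ContinuousLinearMap.mem_range_adjoint_of_norm_inner_le {𝕜 E F : Type*} [RCLike 𝕜]
    [NormedAddCommGroup E] [InnerProductSpace 𝕜 E] [CompleteSpace E]
    [NormedAddCommGroup F] [InnerProductSpace 𝕜 F] [CompleteSpace F]
    (S : E →L[𝕜] F) (b : E) (c : ℝ) (h : ∀ x, ‖⟪b, x⟫_𝕜‖ ≤ c * ‖S x‖) :
    b ∈ Set.range (adjoint S) := by
  obtain ⟨G, hG⟩ := (S : E →ₗ[𝕜] F).exists_strongDual_comp_eq_of_norm_le (innerₛₗ 𝕜 b) c h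
  refine ⟨(InnerProductSpace.toDual 𝕜 F).symm G, ext_inner_right 𝕜 fun x => ?_⟩
  rw [adjoint_inner_left, InnerProductSpace.toDual_symm_apply]
  exact hG x

theorem RCLike.norm_le_mul_of_forall_quadratic_nonneg {𝕜 : Type*} [RCLike 𝕜] {z : 𝕜} {a b : ℝ}
    (ha : 0 ≤ a) (hb : 0 ≤ b) (h : ∀ t : 𝕜, 0 ≤ ‖t‖ ^ 2 * a ^ 2 + 2 * re (t * z) + b ^ 2) :
    ‖z‖ ≤ a * b := by
  obtain ⟨c, hc, hcz⟩ := RCLike.exists_norm_eq_mul_self z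
  have hdisc : discrim (a ^ 2) (-2 * ‖z‖) (b ^ 2) ≤ 0 := discrim_le_zero fun t => by
    have := h (-(t : 𝕜) * c)
    rw [norm_mul, norm_neg, hc, RCLike.norm_ofReal, mul_one, sq_abs, mul_assoc, ← hcz,
      ← RCLike.ofReal_neg, ← RCLike.ofReal_mul, RCLike.ofReal_re] at this
    linarith
  rw [discrim] at hdisc
  nlinarith [norm_nonneg z, mul_nonneg ha hb]

theorem re_inner_blockOperator_adjoint_apply (A X B : H →L[ℂ] H) (u v : H) :
    RCLike.re ⟪blockOperator A X (adjoint X) B (WithLp.toLp 2 (u, v)), WithLp.toLp 2 (u, v)⟫_ℂ =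
      RCLike.re ⟪A u, u⟫_ℂ + RCLike.re ⟪B v, v⟫_ℂ + 2 * RCLike.re ⟪X v, u⟫_ℂ := by
  change RCLike.re ⟪WithLp.toLp 2 (A u + X v, adjoint X u + B v), WithLp.toLp 2 (u, v)⟫_ℂ = _
  rw [WithLp.prod_inner_apply]
  simp only [inner_add_left, map_add, adjoint_inner_left]
  rw [inner_re_symm u]
  ring

/-- If `[[A, X],[X*, B]] ≥ 0` then `R(X) ⊆ R(A^{1/2})` and `R(X*) ⊆ R(B^{1/2})`,
where the square roots are characterized as positive operators squaring to `A`, `B`. -/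
theorem blockOperator_isPositive_range_subset
    (A B X SA SB : H →L[ℂ] H)
    (hM : (blockOperator A X (adjoint X) B).IsPositive)
    (hSA : SA.IsPositive) (hSA2 : SA ∘L SA = A)
    (hSB : SB.IsPositive) (hSB2 : SB ∘L SB = B) :
    Set.range X ⊆ Set.range SA ∧ Set.range (adjoint X) ⊆ Set.range SB := by
  have norm_sq_eq {S : H →L[ℂ] H} (hS : S.IsPositive) (x : H) :
      ‖S x‖ ^ 2 = RCLike.re ⟪(S ∘L S) x, x⟫_ℂ := by
    rw [apply_norm_sq_eq_inner_adjoint_left, hS.isSelfAdjoint.adjoint_eq]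
  have hquad (u v : H) : 0 ≤ ‖SA u‖ ^ 2 + ‖SB v‖ ^ 2 + 2 * RCLike.re ⟪X v, u⟫_ℂ := by
    rw [norm_sq_eq hSA, norm_sq_eq hSB, hSA2, hSB2, ← re_inner_blockOperator_adjoint_apply]
    exact hM.re_inner_nonneg_left _
  have hXbound (u v : H) : ‖⟪X v, u⟫_ℂ‖ ≤ ‖SA u‖ * ‖SB v‖ :=
    RCLike.norm_le_mul_of_forall_quadratic_nonneg (norm_nonneg _) (norm_nonneg _) fun t => by
      simpa [norm_smul, mul_pow, inner_smul_right, add_right_comm] using hquad (t • u) v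
  constructor
  · rintro _ ⟨v, rfl⟩
    rw [← hSA.isSelfAdjoint.adjoint_eq]
    exact mem_range_adjoint_of_norm_inner_le SA _ ‖SB v‖ fun x =>
      (hXbound x v).trans_eq (mul_comm _ _)
  · rintro _ ⟨u, rfl⟩
    rw [← hSB.isSelfAdjoint.adjoint_eq]
    exact mem_range_adjoint_of_norm_inner_le SB _ ‖SA u‖ fun x => by
      rw [adjoint_inner_left, norm_inner_symm]; exact hXbound u x
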